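/- arXiv:1504.05010 — 3 statements merged into one kernel-verified Lean document; each statement's English description precedes it below -/
import Mathlib

section
/- Let q > 2. There exists a constant c > 0, depending only on q, such that for all real numbers a, b one has | |a+b|^q − |a|^q − q·|a|^{q−2}·a·b | ≤ c·( |a|^{q−2}·b² + |b|^q ). -/
/-!
The function `F x = |x| ^ q` has derivative `q * g x` with `g x = |x| ^ (q - 2) * x`, and since
`q > 2` also `g` is differentiable everywhere, with derivative `(q - 1) * |x| ^ (q - 2)`.
Two applications of the mean value inequality on the segment between `a` and `a + b` bound the
first-order Taylor remainder of `F` by `q (q - 1) (|a| + |b|) ^ (q - 2) b ^ 2`, and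
`(|a| + |b|) ^ (q - 2) ≤ 2 ^ (q - 2) (|a| ^ (q - 2) + |b| ^ (q - 2))`.
-/

open Real Filter Set Asymptotics Topology

theorem hasDerivAt_abs_rpow_mul_self {p : ℝ} (hp : 0 < p) (x : ℝ) :
    HasDerivAt (fun x : ℝ ↦ |x| ^ p * x) ((p + 1) * |x| ^ p) x := by
  rcases eq_or_ne x 0 with rfl | hx
  · rw [hasDerivAt_iff_isLittleO_nhds_zero]
    have hlim : Tendsto (fun h : ℝ ↦ |h| ^ p) (𝓝 0) (𝓝 0) := by
      simpa [hp.ne'] using ((continuous_abs.rpow_const fun _ ↦ Or.inr hp.le).tendsto 0)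
    simpa [hp.ne'] using
      (isLittleO_one_iff ℝ |>.mpr hlim).mul_isBigO (isBigO_refl (fun h : ℝ ↦ h) _)
  · have hax : |x| ≠ 0 := abs_ne_zero.mpr hx
    refine (((hasDerivAt_abs hx).rpow_const (p := p) (Or.inl hax)).mul
      (hasDerivAt_id' x)).congr_deriv ?_
    rw [Real.rpow_sub_one hax]
    field_simp
    rw [mul_right_comm, sign_mul_self]
    ring

theorem abs_sub_le_of_mem_uIcc_add {a b y : ℝ} (hy : y ∈ uIcc a (a + b)) :
    |y - a| ≤ |b| := by
  simpa using abs_sub_left_of_mem_uIcc hy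

theorem abs_rpow_mul_self_sub_le_of_mem_uIcc {p : ℝ} (hp : 0 < p) {a b y : ℝ}
    (hy : y ∈ uIcc a (a + b)) :
    |(|y| ^ p * y - |a| ^ p * a)| ≤ (p + 1) * (|a| + |b|) ^ p * |b| := by
  have hderiv_le : ∀ z ∈ uIcc a y, ‖(p + 1) * |z| ^ p‖ ≤ (p + 1) * (|a| + |b|) ^ p := by
    intro z hz
    have hza : |z - a| ≤ |b| :=
      (abs_sub_left_of_mem_uIcc hz).trans (abs_sub_le_of_mem_uIcc_add hy)
    have hz_le : |z| ≤ |a| + |b| := by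
      linarith [abs_sub_abs_le_abs_sub z a]
    rw [norm_mul, norm_of_nonneg (by linarith), norm_of_nonneg (by positivity)]
    gcongr
  calc |(|y| ^ p * y - |a| ^ p * a)|
      ≤ (p + 1) * (|a| + |b|) ^ p * |y - a| :=
        (convex_uIcc a y).norm_image_sub_le_of_norm_hasDerivWithin_le
          (fun z _ ↦ (hasDerivAt_abs_rpow_mul_self hp z).hasDerivWithinAt) hderiv_le
          left_mem_uIcc right_mem_uIcc
    _ ≤ (p + 1) * (|a| + |b|) ^ p * |b| :=
        mul_le_mul_of_nonneg_left (abs_sub_le_of_mem_uIcc_add hy) (by positivity)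

theorem abs_abs_add_rpow_sub_sub_le {q : ℝ} (hq : 2 < q) (a b : ℝ) :
    |(|a + b| ^ q - |a| ^ q - q * |a| ^ (q - 2) * a * b)| ≤
      q * (q - 1) * (|a| + |b|) ^ (q - 2) * b ^ 2 := by
  have hderiv : ∀ y ∈ uIcc a (a + b),
      HasDerivWithinAt (fun x ↦ |x| ^ q - q * |a| ^ (q - 2) * a * x)
        (q * (|y| ^ (q - 2) * y - |a| ^ (q - 2) * a)) (uIcc a (a + b)) y := fun y _ ↦
    (((hasDerivAt_abs_rpow y (by linarith)).sub
      ((hasDerivAt_id' y).const_mul _)).congr_deriv (by ring)).hasDerivWithinAt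
  have hderiv_le : ∀ y ∈ uIcc a (a + b), ‖q * (|y| ^ (q - 2) * y - |a| ^ (q - 2) * a)‖ ≤
      q * (q - 1) * (|a| + |b|) ^ (q - 2) * |b| := by
    intro y hy
    rw [norm_mul, norm_of_nonneg (by linarith), Real.norm_eq_abs, mul_assoc q, mul_assoc q]
    gcongr
    simpa only [show q - 2 + 1 = q - 1 by ring] using
      abs_rpow_mul_self_sub_le_of_mem_uIcc (by linarith : 0 < q - 2) hy
  have := (convex_uIcc a (a + b)).norm_image_sub_le_of_norm_hasDerivWithin_le hderiv hderiv_le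
    left_mem_uIcc right_mem_uIcc
  rw [Real.norm_eq_abs, Real.norm_eq_abs, add_sub_cancel_left] at this
  calc |(|a + b| ^ q - |a| ^ q - q * |a| ^ (q - 2) * a * b)|
      = |(|a + b| ^ q - q * |a| ^ (q - 2) * a * (a + b) -
          (|a| ^ q - q * |a| ^ (q - 2) * a * a))| := by
        ring_nf
    _ ≤ q * (q - 1) * (|a| + |b|) ^ (q - 2) * |b| * |b| := this
    _ = q * (q - 1) * (|a| + |b|) ^ (q - 2) * b ^ 2 := by rw [mul_assoc _ |b|, ← sq, sq_abs]

theorem add_rpow_le_two_rpow_mul_rpow_add_rpow {p x y : ℝ} (hp : 0 ≤ p) (hx : 0 ≤ x)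
    (hy : 0 ≤ y) :
    (x + y) ^ p ≤ 2 ^ p * (x ^ p + y ^ p) := calc
  (x + y) ^ p ≤ (2 * max x y) ^ p := by rw [two_mul]; gcongr <;> simp
  _ = 2 ^ p * max x y ^ p := mul_rpow zero_le_two (le_max_of_le_left hx)
  _ ≤ 2 ^ p * (x ^ p + y ^ p) := by
    gcongr
    rcases le_total x y with h | h
    · rw [max_eq_right h]; linarith [rpow_nonneg hx p]
    · rw [max_eq_left h]; linarith [rpow_nonneg hy p]

theorem stmt_2 (q : ℝ) (hq : 2 < q) :
    ∃ c : ℝ, 0 < c ∧ ∀ a b : ℝ,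
      |(|a + b| ^ q - |a| ^ q - q * |a| ^ (q - 2) * a * b)| ≤
        c * (|a| ^ (q - 2) * b ^ 2 + |b| ^ q) := by
  have hq1 : 0 < q - 1 := by linarith
  refine ⟨q * (q - 1) * 2 ^ (q - 2), by positivity, fun a b ↦ ?_⟩
  have hbq : |b| ^ (q - 2) * b ^ 2 = |b| ^ q := by
    rw [← sq_abs, ← rpow_natCast, ← rpow_add' (abs_nonneg b) (by norm_num; linarith)]
    norm_num
  calc |(|a + b| ^ q - |a| ^ q - q * |a| ^ (q - 2) * a * b)|
      ≤ q * (q - 1) * (|a| + |b|) ^ (q - 2) * b ^ 2 := abs_abs_add_rpow_sub_sub_le hq a b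
    _ ≤ q * (q - 1) * (2 ^ (q - 2) * (|a| ^ (q - 2) + |b| ^ (q - 2))) * b ^ 2 := by
        gcongr
        exact add_rpow_le_two_rpow_mul_rpow_add_rpow (by linarith) (abs_nonneg a) (abs_nonneg b)
    _ = q * (q - 1) * 2 ^ (q - 2) * (|a| ^ (q - 2) * b ^ 2 + |b| ^ q) := by
        rw [← hbq]; ring
end

section
/- Let Ω ⊂ ℝ⁴ be a bounded open set with 0 ∈ Ω, let α₄ = 2√2, and for δ > 0 let U_δ(x) = α₄ · δ / (δ² + |x|²). Then there exist constants C > 0 and δ₀ ∈ (0,1) such that for every δ ∈ (0, δ₀) one has | ∫_Ω U_δ(x)² dx − 16π² δ² log(1/δ) | ≤ C δ². -/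
/-!
Squeeze `Ω` between two balls `B_r ⊆ Ω ⊆ B_R` around the origin. On a ball everything is explicit:
in polar coordinates `∫_{B_ρ} U_δ² = 8δ² · 2π² ∫_0^ρ y³ (δ² + y²)⁻² dy`, and the antiderivative
`(log (δ² + y²) + δ² / (δ² + y²)) / 2` gives `16π²δ² log (1/δ) + 8π²δ² E(δ, ρ)` with
`E(δ, ρ) = log (δ² + ρ²) + δ² / (δ² + ρ²) - 1`. For `δ ≤ 1` the remainder `E(δ, ρ)` lies between
`log ρ² - 1` and `log (1 + ρ²)`, uniformly in `δ`.
-/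

open MeasureTheory Set Metric Real

theorem integral_ball_fun_norm {E : Type*} [NormedAddCommGroup E] [InnerProductSpace ℝ E]
    [FiniteDimensional ℝ E] [Nontrivial E] [MeasurableSpace E] [BorelSpace E] (μ : Measure E)
    [μ.IsAddHaarMeasure] (f : ℝ → ℝ) {ρ : ℝ} (hρ : 0 ≤ ρ) :
    ∫ x in ball (0 : E) ρ, f ‖x‖ ∂μ = Module.finrank ℝ E * μ.real (ball 0 1) *
      ∫ y in 0..ρ, y ^ (Module.finrank ℝ E - 1) * f y := by
  have hball : (ball (0 : E) ρ).indicator (fun x ↦ f ‖x‖) = fun x ↦ (Iio ρ).indicator f ‖x‖ := by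
    ext x
    simp [indicator]
  have hradial : (fun y ↦ y ^ (Module.finrank ℝ E - 1) • (Iio ρ).indicator f y) =
      (Iio ρ).indicator fun y ↦ y ^ (Module.finrank ℝ E - 1) * f y := by
    ext y
    by_cases hy : y < ρ <;> simp [hy]
  rw [← integral_indicator measurableSet_ball, hball, integral_fun_norm_addHaar, hradial,
    setIntegral_indicator measurableSet_Iio, Ioi_inter_Iio, intervalIntegral.integral_of_le hρ,
    integral_Ioc_eq_integral_Ioo, nsmul_eq_mul, smul_eq_mul, mul_assoc]

theorem volume_real_ball_zero_one_fin_four :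
    volume.real (ball (0 : EuclideanSpace ℝ (Fin 4)) 1) = π ^ 2 / 2 := by
  rw [measureReal_def, InnerProductSpace.volume_ball_of_dim_even (k := 2) (by simp)]
  simp [Nat.factorial]
  positivity

theorem integral_cube_mul_inv_sq_add_sq_sq {δ : ℝ} (hδ : δ ≠ 0) (ρ : ℝ) :
    ∫ y in 0..ρ, y ^ 3 * ((δ ^ 2 + y ^ 2) ^ 2)⁻¹ =
      (log (δ ^ 2 + ρ ^ 2) + δ ^ 2 / (δ ^ 2 + ρ ^ 2) - log (δ ^ 2) - 1) / 2 := by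
  have hpos (y : ℝ) : 0 < δ ^ 2 + y ^ 2 := by positivity
  have hderiv (y : ℝ) : HasDerivAt
      (fun y ↦ (log (δ ^ 2 + y ^ 2) + δ ^ 2 / (δ ^ 2 + y ^ 2)) / 2)
      (y ^ 3 * ((δ ^ 2 + y ^ 2) ^ 2)⁻¹) y := by
    have hq : HasDerivAt (fun y : ℝ ↦ δ ^ 2 + y ^ 2) (2 * y) y := by
      simpa using (hasDerivAt_pow 2 y).const_add (δ ^ 2)
    refine (((hq.log (hpos y).ne').add
      ((hasDerivAt_const y (δ ^ 2)).div hq (hpos y).ne')).div_const 2).congr_deriv ?_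
    field_simp
    ring
  have hcont : Continuous fun y : ℝ ↦ y ^ 3 * ((δ ^ 2 + y ^ 2) ^ 2)⁻¹ := by
    fun_prop (disch := exact fun y ↦ (pow_pos (hpos y) 2).ne')
  rw [intervalIntegral.integral_eq_sub_of_hasDerivAt (fun y _ ↦ hderiv y)
    (hcont.intervalIntegrable _ _), zero_pow two_ne_zero, add_zero,
    div_self (pow_ne_zero 2 hδ)]
  ring

noncomputable def bubbleRemainder (δ ρ : ℝ) : ℝ :=
  log (δ ^ 2 + ρ ^ 2) + δ ^ 2 / (δ ^ 2 + ρ ^ 2) - 1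

theorem integral_ball_inv_sq_add_norm_sq_sq {δ : ℝ} (hδ : δ ≠ 0) {ρ : ℝ} (hρ : 0 ≤ ρ) :
    ∫ x in ball (0 : EuclideanSpace ℝ (Fin 4)) ρ, ((δ ^ 2 + ‖x‖ ^ 2) ^ 2)⁻¹ =
      π ^ 2 * (2 * log (1 / δ) + bubbleRemainder δ ρ) := by
  rw [integral_ball_fun_norm volume (fun t ↦ ((δ ^ 2 + t ^ 2) ^ 2)⁻¹) hρ, finrank_euclideanSpace,
    Fintype.card_fin, volume_real_ball_zero_one_fin_four, integral_cube_mul_inv_sq_add_sq_sq hδ,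
    one_div, log_inv, log_pow, bubbleRemainder]
  push_cast
  ring

theorem log_sq_sub_one_le_bubbleRemainder (δ : ℝ) {ρ : ℝ} (hρ : ρ ≠ 0) :
    log (ρ ^ 2) - 1 ≤ bubbleRemainder δ ρ := by
  have hlog : log (ρ ^ 2) ≤ log (δ ^ 2 + ρ ^ 2) :=
    log_le_log (by positivity) (le_add_of_nonneg_left (sq_nonneg δ))
  have hfrac : 0 ≤ δ ^ 2 / (δ ^ 2 + ρ ^ 2) := by positivity
  rw [bubbleRemainder]
  linarith

theorem bubbleRemainder_le_log_one_add_sq {δ ρ : ℝ} (hδ : δ ^ 2 ≤ 1) (hρ : ρ ≠ 0) :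
    bubbleRemainder δ ρ ≤ log (1 + ρ ^ 2) := by
  have hpos : 0 < δ ^ 2 + ρ ^ 2 := by positivity
  have hlog : log (δ ^ 2 + ρ ^ 2) ≤ log (1 + ρ ^ 2) := log_le_log hpos (by linarith)
  have hfrac : δ ^ 2 / (δ ^ 2 + ρ ^ 2) ≤ 1 :=
    (div_le_one hpos).mpr (le_add_of_nonneg_right (sq_nonneg ρ))
  rw [bubbleRemainder]
  linarith

theorem integral_inv_sq_add_norm_sq_sq_mem_Icc {Ω : Set (EuclideanSpace ℝ (Fin 4))} {δ : ℝ}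
    (hδ : δ ≠ 0) {r R : ℝ} (hr : 0 ≤ r) (hR : 0 ≤ R) (hrΩ : ball 0 r ⊆ Ω) (hΩR : Ω ⊆ ball 0 R) :
    ∫ x in Ω, ((δ ^ 2 + ‖x‖ ^ 2) ^ 2)⁻¹ ∈
      Icc (π ^ 2 * (2 * log (1 / δ) + bubbleRemainder δ r))
        (π ^ 2 * (2 * log (1 / δ) + bubbleRemainder δ R)) := by
  have hcont : Continuous fun x : EuclideanSpace ℝ (Fin 4) ↦ ((δ ^ 2 + ‖x‖ ^ 2) ^ 2)⁻¹ := by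
    fun_prop (disch := exact fun x ↦ by positivity)
  have hint : IntegrableOn (fun x : EuclideanSpace ℝ (Fin 4) ↦ ((δ ^ 2 + ‖x‖ ^ 2) ^ 2)⁻¹)
      (ball 0 R) :=
    (hcont.continuousOn.integrableOn_compact (isCompact_closedBall 0 R)).mono_set
      ball_subset_closedBall
  have hnonneg (s : Set (EuclideanSpace ℝ (Fin 4))) :
      0 ≤ᵐ[volume.restrict s] fun x ↦ ((δ ^ 2 + ‖x‖ ^ 2) ^ 2)⁻¹ :=
    .of_forall fun x ↦ by positivity
  rw [← integral_ball_inv_sq_add_norm_sq_sq hδ hr, ← integral_ball_inv_sq_add_norm_sq_sq hδ hR]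
  exact ⟨setIntegral_mono_set (hint.mono_set hΩR) (hnonneg Ω) hrΩ.eventuallyLE,
    setIntegral_mono_set hint (hnonneg _) hΩR.eventuallyLE⟩

theorem abs_setIntegral_inv_sq_add_norm_sq_sq_sub_le {Ω : Set (EuclideanSpace ℝ (Fin 4))}
    {δ : ℝ} (hδ : δ ≠ 0) (hδ1 : δ ^ 2 ≤ 1) {r R : ℝ} (hr : 0 < r) (hrΩ : ball 0 r ⊆ Ω)
    (hΩR : Ω ⊆ ball 0 R) :
    |(∫ x in Ω, ((δ ^ 2 + ‖x‖ ^ 2) ^ 2)⁻¹) - π ^ 2 * (2 * log (1 / δ))| ≤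
      π ^ 2 * max |log (r ^ 2) - 1| |log (1 + R ^ 2)| := by
  have hR : 0 < R := pos_of_mem_ball (hΩR (hrΩ (mem_ball_self hr)))
  obtain ⟨hlow, hhigh⟩ := integral_inv_sq_add_norm_sq_sq_mem_Icc hδ hr.le hR.le hrΩ hΩR
  have hlo : -max |log (r ^ 2) - 1| |log (1 + R ^ 2)| ≤ bubbleRemainder δ r := by
    linarith [log_sq_sub_one_le_bubbleRemainder δ hr.ne', neg_abs_le (log (r ^ 2) - 1),
      le_max_left |log (r ^ 2) - 1| |log (1 + R ^ 2)|]
  have hhi : bubbleRemainder δ R ≤ max |log (r ^ 2) - 1| |log (1 + R ^ 2)| := by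
    linarith [bubbleRemainder_le_log_one_add_sq hδ1 hR.ne', le_abs_self (log (1 + R ^ 2)),
      le_max_right |log (r ^ 2) - 1| |log (1 + R ^ 2)|]
  have hπ : 0 ≤ π ^ 2 := by positivity
  rw [abs_le]
  constructor <;> linarith [mul_le_mul_of_nonneg_left hlo hπ, mul_le_mul_of_nonneg_left hhi hπ]

theorem stmt_10 (Ω : Set (EuclideanSpace ℝ (Fin 4))) (hΩo : IsOpen Ω)
    (hΩb : Bornology.IsBounded Ω) (h0 : (0 : EuclideanSpace ℝ (Fin 4)) ∈ Ω)
    (α₄ : ℝ) (hα : α₄ = 2 * Real.sqrt 2)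
    (U : ℝ → EuclideanSpace ℝ (Fin 4) → ℝ)
    (hU : ∀ δ x, U δ x = α₄ * δ / (δ ^ 2 + ‖x‖ ^ 2)) :
    ∃ C : ℝ, 0 < C ∧ ∃ δ₀ : ℝ, 0 < δ₀ ∧ δ₀ < 1 ∧ ∀ δ : ℝ, 0 < δ → δ < δ₀ →
      |(∫ x in Ω, (U δ x) ^ 2) - 16 * Real.pi ^ 2 * δ ^ 2 * Real.log (1 / δ)| ≤ C * δ ^ 2 := by
  obtain ⟨r, hr, hrΩ⟩ := isOpen_iff.mp hΩo 0 h0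
  obtain ⟨R, hΩR⟩ := hΩb.subset_ball 0
  have hR : 0 < R := pos_of_mem_ball (hΩR h0)
  set K := max |log (r ^ 2) - 1| |log (1 + R ^ 2)|
  have hK : 0 < K := lt_max_of_lt_right (abs_pos.mpr (log_pos (by nlinarith)).ne')
  refine ⟨8 * π ^ 2 * K, by positivity, 1 / 2, by norm_num, by norm_num, fun δ hδ hδ₀ ↦ ?_⟩
  have hU2 (x : EuclideanSpace ℝ (Fin 4)) :
      U δ x ^ 2 = 8 * δ ^ 2 * ((δ ^ 2 + ‖x‖ ^ 2) ^ 2)⁻¹ := by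
    rw [hU, hα, div_pow, mul_pow, mul_pow, sq_sqrt zero_le_two]
    ring
  have hdev := abs_setIntegral_inv_sq_add_norm_sq_sq_sub_le hδ.ne' (by nlinarith) hr hrΩ hΩR
  simp_rw [hU2]
  rw [integral_const_mul]
  calc |(8 * δ ^ 2 * ∫ x in Ω, ((δ ^ 2 + ‖x‖ ^ 2) ^ 2)⁻¹) - 16 * π ^ 2 * δ ^ 2 * log (1 / δ)|
      = |8 * δ ^ 2 * ((∫ x in Ω, ((δ ^ 2 + ‖x‖ ^ 2) ^ 2)⁻¹) - π ^ 2 * (2 * log (1 / δ)))| := by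
        ring_nf
    _ = 8 * δ ^ 2 * |(∫ x in Ω, ((δ ^ 2 + ‖x‖ ^ 2) ^ 2)⁻¹) - π ^ 2 * (2 * log (1 / δ))| := by
        rw [abs_mul, abs_of_nonneg (by positivity)]
    _ ≤ 8 * δ ^ 2 * (π ^ 2 * K) := by gcongr
    _ = 8 * π ^ 2 * K * δ ^ 2 := by ring
end

section
/- Let Ω ⊂ ℝ⁵ be a bounded open set with 0 ∈ Ω, let α₅ = 15^{3/4}, and for δ > 0 let U_δ(x) = α₅ · δ^{3/2} / (δ² + |x|²)^{3/2}. Then there exist constants C > 0 and δ₀ ∈ (0,1) such that for every δ ∈ (0, δ₀) one has | ∫_Ω U_δ(x)² dx − δ² ∫_{ℝ⁵} U₁(x)² dx | ≤ C δ³, where U₁ is the bubble with δ = 1 (whose square is integrable on ℝ⁵). -/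
/-!
With `K_δ x = δ / (δ² + ‖x‖²)` one has `U_δ² = α₅² K_δ³`, and the scaling
`K_δ x = δ⁻¹ K₁ (δ⁻¹ x)` gives `∫ K_δ³ = δ⁵⁻³ ∫ K₁³` over all of `ℝ⁵`, the integral being finite
because `K₁³ ~ ‖x‖⁻⁶` and `6 > 5`. So the claim is that the mass of `K_δ³` outside `Ω` is
`O(δ³)`. Since `Ω` contains a ball of radius `r` about `0`, and `K_δ ≤ δ (1 + r²) / r² · K₁` on
`‖x‖ ≥ r`, that mass is at most `δ³ ((1 + r²) / r²)³ ∫ K₁³`.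
-/

open MeasureTheory Module Filter Topology

lemma sq_rpow_div_two {t : ℝ} (ht : 0 ≤ t) (n : ℕ) : (t ^ ((n : ℝ) / 2)) ^ 2 = t ^ n := by
  rw [← Real.rpow_mul_natCast ht, ← Real.rpow_natCast]
  norm_num

/-- The bubble on an `N`-dimensional space is `α_N * bubbleKernel δ x ^ ((N - 2) / 2)`. -/
noncomputable def bubbleKernel {E : Type*} [NormedAddCommGroup E] (δ : ℝ) (x : E) : ℝ :=
  δ / (δ ^ 2 + ‖x‖ ^ 2)

section Kernel

variable {E : Type*} [NormedAddCommGroup E]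

lemma bubbleKernel_nonneg {δ : ℝ} (hδ : 0 ≤ δ) (x : E) : 0 ≤ bubbleKernel δ x := by
  unfold bubbleKernel
  positivity

lemma bubbleKernel_le_mul_of_le_norm {δ r : ℝ} (hδ : 0 ≤ δ) (hr : 0 < r) {x : E}
    (hx : r ≤ ‖x‖) : bubbleKernel δ x ≤ δ * ((1 + r ^ 2) / r ^ 2) * bubbleKernel 1 x := by
  have hxr : r ^ 2 ≤ ‖x‖ ^ 2 := pow_le_pow_left₀ hr.le hx 2
  have hx₀ : 0 < ‖x‖ := hr.trans_le hx
  calc δ / (δ ^ 2 + ‖x‖ ^ 2) ≤ δ / ‖x‖ ^ 2 :=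
        div_le_div_of_nonneg_left hδ (by positivity) (by nlinarith)
    _ ≤ δ * ((1 + r ^ 2) / r ^ 2) * (1 / (1 ^ 2 + ‖x‖ ^ 2)) := by
        rw [div_eq_mul_one_div δ, mul_assoc]
        gcongr
        rw [div_mul_div_comm, div_le_div_iff₀ (by positivity) (by positivity)]
        nlinarith

variable [NormedSpace ℝ E]

lemma bubbleKernel_eq_inv_mul {δ : ℝ} (hδ : 0 < δ) (x : E) :
    bubbleKernel δ x = δ⁻¹ * bubbleKernel 1 (δ⁻¹ • x) := by
  rw [bubbleKernel, bubbleKernel, norm_smul, Real.norm_eq_abs, abs_inv, abs_of_pos hδ]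
  field_simp

end Kernel

section Integral

variable {E : Type*} [NormedAddCommGroup E] [NormedSpace ℝ E] [FiniteDimensional ℝ E]
  [MeasurableSpace E] [BorelSpace E] {μ : Measure E} [μ.IsAddHaarMeasure] {p : ℕ}

lemma integrable_bubbleKernel_one_pow (hp : finrank ℝ E < 2 * p) :
    Integrable (fun x => bubbleKernel 1 x ^ p) μ := by
  refine (integrable_rpow_neg_one_add_norm_sq (r := 2 * p) (by exact_mod_cast hp)).congr
    (.of_forall fun x => ?_)
  simp only [bubbleKernel]
  rw [neg_div, mul_div_cancel_left₀ _ two_ne_zero, Real.rpow_neg (by positivity),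
    Real.rpow_natCast, one_pow, one_div, inv_pow]

lemma integrable_bubbleKernel_pow (hp : finrank ℝ E < 2 * p) {δ : ℝ} (hδ : 0 < δ) :
    Integrable (fun x => bubbleKernel δ x ^ p) μ := by
  simp_rw [bubbleKernel_eq_inv_mul hδ, mul_pow]
  exact ((integrable_bubbleKernel_one_pow hp).comp_smul (inv_ne_zero hδ.ne')).const_mul _

lemma integral_bubbleKernel_pow {δ : ℝ} (hδ : 0 < δ) :
    ∫ x, bubbleKernel δ x ^ p ∂μ =
      δ ^ ((finrank ℝ E : ℤ) - p) * ∫ x, bubbleKernel 1 x ^ p ∂μ := by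
  simp_rw [bubbleKernel_eq_inv_mul hδ, mul_pow]
  rw [integral_const_mul,
    Measure.integral_comp_inv_smul_of_nonneg μ (fun x => bubbleKernel 1 x ^ p) hδ.le,
    smul_eq_mul, ← mul_assoc, zpow_sub₀ hδ.ne', zpow_natCast, zpow_natCast, inv_pow,
    div_eq_inv_mul]

theorem exists_abs_setIntegral_sub_integral_bubbleKernel_pow_le (hp : finrank ℝ E < 2 * p)
    {Ω : Set E} (hΩm : MeasurableSet Ω) (hΩ : Ω ∈ 𝓝 0) :
    ∃ C, 0 ≤ C ∧ ∀ δ, 0 < δ →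
      |(∫ x in Ω, bubbleKernel δ x ^ p ∂μ) - ∫ x, bubbleKernel δ x ^ p ∂μ| ≤ C * δ ^ p := by
  obtain ⟨r, hr, hball⟩ := Metric.mem_nhds_iff.mp hΩ
  set K := ((1 + r ^ 2) / r ^ 2) ^ p
  have hint₁ := integrable_bubbleKernel_one_pow (μ := μ) hp
  have hnonneg {δ : ℝ} (hδ : 0 ≤ δ) (x : E) : 0 ≤ bubbleKernel δ x ^ p :=
    pow_nonneg (bubbleKernel_nonneg hδ x) p
  refine ⟨K * ∫ x, bubbleKernel 1 x ^ p ∂μ,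
    mul_nonneg (by positivity) (integral_nonneg (hnonneg zero_le_one)), fun δ hδ => ?_⟩
  have hint := integrable_bubbleKernel_pow (μ := μ) hp hδ
  have htail : ∀ x ∈ Ωᶜ, bubbleKernel δ x ^ p ≤ δ ^ p * K * bubbleKernel 1 x ^ p := by
    intro x hx
    have hrx : r ≤ ‖x‖ := by
      simpa using fun h => hx (hball (mem_ball_zero_iff.mpr h))
    calc bubbleKernel δ x ^ p ≤ (δ * ((1 + r ^ 2) / r ^ 2) * bubbleKernel 1 x) ^ p :=
          pow_le_pow_left₀ (bubbleKernel_nonneg hδ.le x)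
            (bubbleKernel_le_mul_of_le_norm hδ.le hr hrx) p
      _ = δ ^ p * K * bubbleKernel 1 x ^ p := by rw [mul_pow, mul_pow]
  rw [← integral_add_compl hΩm hint, sub_add_cancel_left, abs_neg,
    abs_of_nonneg (setIntegral_nonneg hΩm.compl fun x _ => hnonneg hδ.le x)]
  calc ∫ x in Ωᶜ, bubbleKernel δ x ^ p ∂μ
      ≤ ∫ x in Ωᶜ, δ ^ p * K * bubbleKernel 1 x ^ p ∂μ :=
        setIntegral_mono_on hint.integrableOn (hint₁.const_mul _).integrableOn hΩm.compl htail
    _ ≤ ∫ x, δ ^ p * K * bubbleKernel 1 x ^ p ∂μ :=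
        setIntegral_le_integral (hint₁.const_mul _)
          (.of_forall fun x => mul_nonneg (by positivity) (hnonneg zero_le_one x))
    _ = K * (∫ x, bubbleKernel 1 x ^ p ∂μ) * δ ^ p := by rw [integral_const_mul]; ring

end Integral

theorem stmt_11_general (Ω : Set (EuclideanSpace ℝ (Fin 5))) (hΩo : IsOpen Ω)
    (h0 : (0 : EuclideanSpace ℝ (Fin 5)) ∈ Ω)
    (α₅ : ℝ)
    (U : ℝ → EuclideanSpace ℝ (Fin 5) → ℝ)
    (hU : ∀ δ x, U δ x = α₅ * δ ^ ((3 : ℝ) / 2) / (δ ^ 2 + ‖x‖ ^ 2) ^ ((3 : ℝ) / 2)) :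
    Integrable (fun x => (U 1 x) ^ 2) ∧
    ∃ C : ℝ, 0 < C ∧ ∃ δ₀ : ℝ, 0 < δ₀ ∧ δ₀ < 1 ∧ ∀ δ : ℝ, 0 < δ → δ < δ₀ →
      |(∫ x in Ω, (U δ x) ^ 2) - δ ^ 2 * ∫ x, (U 1 x) ^ 2| ≤ C * δ ^ 3 := by
  have hU_sq : ∀ δ, 0 ≤ δ → ∀ x, U δ x ^ 2 = α₅ ^ 2 * bubbleKernel δ x ^ 3 := by
    intro δ hδ x
    rw [hU, mul_div_assoc, ← Real.div_rpow hδ (by positivity), mul_pow]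
    exact congrArg _ (by exact_mod_cast sq_rpow_div_two (bubbleKernel_nonneg hδ x) 3)
  have hp : finrank ℝ (EuclideanSpace ℝ (Fin 5)) < 2 * 3 := by simp
  obtain ⟨C, hC, hbound⟩ := exists_abs_setIntegral_sub_integral_bubbleKernel_pow_le
    (μ := volume) hp hΩo.measurableSet (hΩo.mem_nhds h0)
  refine ⟨?_, α₅ ^ 2 * C + 1, by positivity, 1 / 2, by norm_num, by norm_num, fun δ hδ _ => ?_⟩
  · simp_rw [hU_sq 1 zero_le_one]
    exact (integrable_bubbleKernel_one_pow hp).const_mul _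
  have hscale : δ ^ 2 * ∫ x : EuclideanSpace ℝ (Fin 5), bubbleKernel 1 x ^ 3 =
      ∫ x : EuclideanSpace ℝ (Fin 5), bubbleKernel δ x ^ 3 := by
    rw [integral_bubbleKernel_pow hδ]
    norm_num
  simp_rw [hU_sq δ hδ.le, hU_sq 1 zero_le_one, integral_const_mul]
  calc _ = α₅ ^ 2 * |(∫ x in Ω, bubbleKernel δ x ^ 3) - ∫ x, bubbleKernel δ x ^ 3| := by
        rw [mul_left_comm (δ ^ 2), hscale, ← mul_sub, abs_mul, abs_of_nonneg (sq_nonneg α₅)]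
    _ ≤ α₅ ^ 2 * (C * δ ^ 3) := by gcongr; exact hbound δ hδ
    _ ≤ (α₅ ^ 2 * C + 1) * δ ^ 3 := by nlinarith [pow_pos hδ 3]

theorem stmt_11 (Ω : Set (EuclideanSpace ℝ (Fin 5))) (hΩo : IsOpen Ω)
    (hΩb : Bornology.IsBounded Ω) (h0 : (0 : EuclideanSpace ℝ (Fin 5)) ∈ Ω)
    (α₅ : ℝ) (hα : α₅ = (15 : ℝ) ^ ((3 : ℝ) / 4))
    (U : ℝ → EuclideanSpace ℝ (Fin 5) → ℝ)
    (hU : ∀ δ x, U δ x = α₅ * δ ^ ((3 : ℝ) / 2) / (δ ^ 2 + ‖x‖ ^ 2) ^ ((3 : ℝ) / 2)) :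
    Integrable (fun x => (U 1 x) ^ 2) ∧
    ∃ C : ℝ, 0 < C ∧ ∃ δ₀ : ℝ, 0 < δ₀ ∧ δ₀ < 1 ∧ ∀ δ : ℝ, 0 < δ → δ < δ₀ →
      |(∫ x in Ω, (U δ x) ^ 2) - δ ^ 2 * ∫ x, (U 1 x) ^ 2| ≤ C * δ ^ 3 :=
  stmt_11_general Ω hΩo h0 α₅ U hU
end
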